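/- For every positive integer λ and every function H : {0,1}^{5λ} → {0,1}^{6λ}, the squared sum (∑_{y ∈ {0,1}^{6λ}} √(Pr_x[H(x) = y] / 2^{6λ}))² is at most 2^{-λ}. -/

import Mathlib

/-!
Fidelity with the maximally mixed state is at most the rank over the dimension: by Cauchy–Schwarz,
`(∑ y, √(p y / |β|))² ≤ #(supp p) · ∑ y, p y / |β|`, and the support of the pushforward `p` of the
uniform distribution along `H : α → β` has at most `|α|` points.
-/

open Finset

theorem sq_sum_sqrt_le_card_mul_sum {ι : Type*} (s : Finset ι) {f : ι → ℝ}
    (hf : ∀ i ∈ s, 0 ≤ f i) : (∑ i ∈ s, √(f i)) ^ 2 ≤ #s * ∑ i ∈ s, f i := by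
  calc (∑ i ∈ s, √(f i)) ^ 2 ≤ #s * ∑ i ∈ s, √(f i) ^ 2 := sq_sum_le_card_mul_sum_sq
    _ = #s * ∑ i ∈ s, f i := by
      rw [sum_congr rfl fun i hi => Real.sq_sqrt (hf i hi)]

theorem sq_sum_sqrt_fiber_prob_div_card_le {α β : Type*} [Fintype α] [Fintype β]
    [DecidableEq β] (H : α → β) :
    (∑ y, √((#{x | H x = y} : ℝ) / Fintype.card α / Fintype.card β)) ^ 2
      ≤ Fintype.card α / Fintype.card β := by
  set img := univ.image H
  have hzero_off_img : ∀ y ∈ univ, y ∉ img →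
      √((#{x | H x = y} : ℝ) / Fintype.card α / Fintype.card β) = 0 := by
    intro y _ hy
    rw [filter_eq_empty_iff.2 fun x _ hx => hy (mem_image.2 ⟨x, mem_univ x, hx⟩)]
    simp
  have hmass : ∑ y ∈ img, (#{x | H x = y} : ℝ) = Fintype.card α := by
    exact_mod_cast (card_eq_sum_card_image H univ).symm
  calc (∑ y, √((#{x | H x = y} : ℝ) / Fintype.card α / Fintype.card β)) ^ 2
      = (∑ y ∈ img, √((#{x | H x = y} : ℝ) / Fintype.card α / Fintype.card β)) ^ 2 := by
        rw [sum_subset (subset_univ img) hzero_off_img]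
    _ ≤ #img * ∑ y ∈ img, (#{x | H x = y} : ℝ) / Fintype.card α / Fintype.card β :=
        sq_sum_sqrt_le_card_mul_sum img fun y _ => by positivity
    _ = #img * ((Fintype.card α / Fintype.card α : ℝ) / Fintype.card β) := by
        rw [← sum_div, ← sum_div, hmass]
    _ ≤ Fintype.card α * (1 / Fintype.card β) := by
        gcongr
        · exact_mod_cast card_image_le.trans_eq card_univ
        · exact div_self_le_one _
    _ = Fintype.card α / Fintype.card β := mul_one_div _ _

theorem fidelity_le_two_pow_neg_general
    (lam : ℕ) (H : Fin (2 ^ (5 * lam)) → Fin (2 ^ (6 * lam))) :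
    (∑ y : Fin (2 ^ (6 * lam)), Real.sqrt
        ((((univ.filter (fun x => H x = y)).card : ℝ) / 2 ^ (5 * lam)) / 2 ^ (6 * lam))) ^ 2
      ≤ (2 : ℝ) ^ (-(lam : ℤ)) := by
  have h := sq_sum_sqrt_fiber_prob_div_card_le H
  simp only [Fintype.card_fin, Nat.cast_pow, Nat.cast_ofNat] at h
  refine h.trans_eq ?_
  rw [← zpow_natCast, ← zpow_natCast, ← zpow_sub₀ two_ne_zero]
  congr 1
  push_cast
  ring

/-- For every positive `λ` and every `H : {0,1}^{5λ} → {0,1}^{6λ}`,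
`(∑ y, √(Pr_x[H x = y] / 2^{6λ}))² ≤ 2^{-λ}`. -/
theorem fidelity_le_two_pow_neg
    (lam : ℕ) (hlam : 0 < lam) (H : Fin (2 ^ (5 * lam)) → Fin (2 ^ (6 * lam))) :
    (∑ y : Fin (2 ^ (6 * lam)), Real.sqrt
        ((((univ.filter (fun x => H x = y)).card : ℝ) / 2 ^ (5 * lam)) / 2 ^ (6 * lam))) ^ 2
      ≤ (2 : ℝ) ^ (-(lam : ℤ)) :=
  fidelity_le_two_pow_neg_general lam H
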